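/- arXiv:1002.2208 — 5 statements merged into one kernel-verified Lean document; each statement's English description precedes it below -/
import Mathlib

section
/- Let π : 𝔽_p^n → 𝔽_p be a polynomial of degree d with associated symmetric d-linear form κ, and define the analytic rank r by p^{-r} = 𝔼_{h₁,…,h_d} ω^{κ(h₁,…,h_d)}. Then |𝔼_{x∈𝔽_p^n} ω^{π(x)}| ≤ p^{-r/2^{d-1}}. -/
open Finset

/-- The additive character `t ↦ exp(2πi t / p)` on `ZMod p`. -/
noncomputable def e (p : ℕ) (t : ZMod p) : ℂ :=
  Complex.exp (2 * Real.pi * Complex.I * (t.val : ℂ) / (p : ℂ))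

/-!
Repeated Cauchy–Schwarz (van der Corput) bounds `|𝔼ₓ ω^{π(x)}|^{2^{d-1}}` by the average over
`h ∈ (𝔽_p^n)^{d-1}` of `|𝔼ₓ ω^{Δ_h π(x)}|`. As `π` has degree at most `d`, every
`(d-1)`-fold difference `Δ_h π` is affine, with linear part `u ↦ κ(u, h)`, so
`|𝔼ₓ ω^{Δ_h π(x)}|` is the mean of the character `u ↦ ω^{κ(u, h)}`, which is `1` or `0`.
Averaging over `h` gives exactly `𝔼_{h₁,…,h_d} ω^{κ(h)} = p^{-r}`.
-/

open scoped BigOperators fwdDiff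

lemma Fin.sum_finset_succ {β : Type*} [AddCommMonoid β] {m : ℕ} (F : Finset (Fin (m + 1)) → β) :
    ∑ S, F S = ∑ S : Finset (Fin m),
      (F (S.map (Fin.succEmb m)) + F (insert 0 (S.map (Fin.succEmb m)))) := by
  rw [← powerset_univ, Fin.univ_succ, cons_eq_insert, sum_powerset_insert (by simp),
    ← sum_add_distrib, map_eq_image, powerset_image, sum_image, powerset_univ]
  · simp [map_eq_image]
  · exact (image_injective (Fin.succ_injective m)).injOn

section IterFwdDiff

variable {M G : Type*} [AddCommMonoid M] [AddCommGroup G]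

def iterFwdDiff : {m : ℕ} → (Fin m → M) → (M → G) → M → G
  | 0, _, f => f
  | _ + 1, h, f => iterFwdDiff (Fin.tail h) (Δ_[h 0] f)

lemma iterFwdDiff_cons {m : ℕ} (u : M) (h : Fin m → M) (f : M → G) :
    iterFwdDiff (Fin.cons u h : Fin (m + 1) → M) f = iterFwdDiff h (Δ_[u] f) := by
  simp only [iterFwdDiff, Fin.tail_cons, Fin.cons_zero]

lemma fwdDiff_comm (u v : M) (f : M → G) : Δ_[u] (Δ_[v] f) = Δ_[v] (Δ_[u] f) := by
  ext x
  simp only [fwdDiff, add_right_comm x u v]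
  abel

lemma fwdDiff_iterFwdDiff (u : M) :
    ∀ {m : ℕ} (h : Fin m → M) (f : M → G), Δ_[u] (iterFwdDiff h f) = iterFwdDiff h (Δ_[u] f)
  | 0, _, _ => rfl
  | _ + 1, h, f => by simp only [iterFwdDiff, fwdDiff_iterFwdDiff, fwdDiff_comm u (h 0)]

lemma iterFwdDiff_eq_sum : ∀ {m : ℕ} (h : Fin m → M) (f : M → G) (x : M),
    iterFwdDiff h f x = ∑ S : Finset (Fin m), (-1 : ℤ) ^ (m - #S) • f (x + ∑ i ∈ S, h i)
  | 0, _, f, x => by simp [iterFwdDiff, univ_unique, eq_empty_of_isEmpty]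
  | m + 1, h, f, x => by
    rw [iterFwdDiff, iterFwdDiff_eq_sum, Fin.sum_finset_succ]
    refine sum_congr rfl fun S _ => ?_
    have hS : #S ≤ m := card_le_univ S |>.trans_eq (Fintype.card_fin m)
    rw [card_insert_of_notMem (by simp), card_map, sum_insert (by simp), sum_map,
      Nat.succ_sub hS, Nat.add_sub_add_right, pow_succ]
    simp only [fwdDiff, Fin.tail, Fin.coe_succEmb, smul_sub, mul_neg_one, neg_smul]
    rw [add_right_comm, add_assoc]
    abel

end IterFwdDiff

namespace MvPolynomial

variable {σ R : Type*} [CommRing R]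

noncomputable def translate (u : σ → R) : MvPolynomial σ R →ₐ[R] MvPolynomial σ R :=
  aeval fun i => X i + C (u i)

lemma eval_translate (u x : σ → R) (Q : MvPolynomial σ R) :
    eval x (translate u Q) = eval (x + u) Q := by
  rw [translate]
  induction Q using MvPolynomial.induction_on with
  | C a => simp
  | add P Q hP hQ => simp only [map_add, hP, hQ]
  | mul_X P i hP => simp only [map_mul, hP, aeval_X, eval_X, eval_add, eval_C, Pi.add_apply]

lemma fwdDiff_eval (u : σ → R) (Q : MvPolynomial σ R) :
    Δ_[u] (fun x => eval x Q) = fun x => eval x (translate u Q - Q) := by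
  ext x
  simp [fwdDiff, eval_translate]

lemma totalDegree_mul_X {P : MvPolynomial σ R} (hP : P ≠ 0) (i : σ) :
    (P * X i).totalDegree = P.totalDegree + 1 := by
  obtain ⟨s, hs, hdeg⟩ := P.support.exists_mem_eq_sup (support_nonempty.mpr hP)
    fun s => s.sum fun _ e => e
  have : Nontrivial R := nontrivial_of_ne _ _ (mem_support_iff.mp hs)
  refine le_antisymm ((totalDegree_mul _ _).trans (by simp)) ?_
  have hmem : s + Finsupp.single i 1 ∈ (P * X i).support := by
    rwa [mem_support_iff, coeff_mul_X, ← mem_support_iff]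
  have := le_totalDegree hmem
  rw [Finsupp.sum_add_index' (fun _ => rfl) (fun _ _ _ => rfl), Finsupp.sum_single_index rfl]
    at this
  rwa [totalDegree, hdeg]

lemma translate_monomial_sub_eq_zero_or_totalDegree_lt (u : σ → R) (s : σ →₀ ℕ) (a : R) :
    translate u (monomial s a) - monomial s a = 0 ∨
      (translate u (monomial s a) - monomial s a).totalDegree < (monomial s a).totalDegree := by
  refine induction_on_monomial
    (motive := fun P => translate u P - P = 0 ∨ (translate u P - P).totalDegree < P.totalDegree)
    (fun a => by simp [translate]) (fun P i hP => ?_) s a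
  by_cases hP0 : P = 0
  · simp [hP0]
  right
  have hprod : translate u (P * X i) - P * X i
      = (translate u P - P) * (X i + C (u i)) + P * C (u i) := by
    simp only [map_mul, translate, aeval_X]
    ring
  have hlin : (X i + C (u i) : MvPolynomial σ R).totalDegree ≤ 1 :=
    (totalDegree_add _ _).trans (max_le ((totalDegree_monomial_le _ _).trans (by simp)) (by simp))
  rw [hprod, totalDegree_mul_X hP0]
  refine (totalDegree_add _ _).trans_lt (max_lt ?_ ?_)
  · rcases hP with hP | hP
    · simp [hP]
    · calc _ ≤ (translate u P - P).totalDegree + (X i + C (u i)).totalDegree :=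
            totalDegree_mul _ _
        _ < P.totalDegree + 1 := by omega
  · calc _ ≤ P.totalDegree + (C (u i) : MvPolynomial σ R).totalDegree := totalDegree_mul _ _
      _ < P.totalDegree + 1 := by simp

lemma translate_sub_eq_zero_or_totalDegree_lt (u : σ → R) (Q : MvPolynomial σ R) :
    translate u Q - Q = 0 ∨ (translate u Q - Q).totalDegree < Q.totalDegree := by
  obtain hQ | hQ := Nat.eq_zero_or_pos Q.totalDegree
  · left
    rw [totalDegree_eq_zero_iff_eq_C.mp hQ]
    simp [translate]
  right
  have hsum : translate u Q - Q = ∑ s ∈ Q.support,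
      (translate u (monomial s (coeff s Q)) - monomial s (coeff s Q)) := by
    conv_lhs => rw [Q.as_sum]
    rw [map_sum, sum_sub_distrib]
  rw [hsum]
  refine (totalDegree_finsetSum_le (d := Q.totalDegree - 1) fun s hs => ?_).trans_lt (by omega)
  have hs : (monomial s (coeff s Q)).totalDegree ≤ Q.totalDegree :=
    (totalDegree_monomial_le _ _).trans (le_totalDegree hs)
  rcases translate_monomial_sub_eq_zero_or_totalDegree_lt u s (coeff s Q) with h | h
  · simp [h]
  · omega

lemma iterFwdDiff_eval_eq_zero : ∀ {k : ℕ} (Q : MvPolynomial σ R), Q.totalDegree < k →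
    ∀ h : Fin k → σ → R, iterFwdDiff h (fun x => eval x Q) = 0
  | 0, _, hQ, _ => absurd hQ (Nat.not_lt_zero _)
  | k + 1, Q, hQ, h => by
    rw [iterFwdDiff, fwdDiff_eval]
    rcases translate_sub_eq_zero_or_totalDegree_lt (h 0) Q with h0 | hlt
    · ext x
      simp [h0, iterFwdDiff_eq_sum]
    · exact iterFwdDiff_eval_eq_zero _ (by omega) _

end MvPolynomial

lemma expect_pi_fin_succ {V β : Type*} [Fintype V] [AddCommMonoid β] [Module ℚ≥0 β] {m : ℕ}
    (F : (Fin (m + 1) → V) → β) : 𝔼 h, F h = 𝔼 u, 𝔼 h, F (Fin.cons u h) := by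
  rw [← expect_product', univ_product_univ]
  exact (Fintype.expect_equiv (Fin.consEquiv fun _ => V) _ _ fun _ => rfl).symm

section Character

variable {V G : Type*} [AddCommGroup V] [Fintype V] [AddCommGroup G] [Finite G]
  (ψ : AddChar G ℂ)

lemma norm_expect_sq_le_expect_norm_expect_fwdDiff (f : V → G) :
    ‖𝔼 x, ψ (f x)‖ ^ 2 ≤ 𝔼 u, ‖𝔼 x, ψ (Δ_[u] f x)‖ := by
  have hsq : ((‖𝔼 x, ψ (f x)‖ ^ 2 : ℝ) : ℂ) = 𝔼 u, 𝔼 x, ψ (Δ_[u] f x) := by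
    rw [Complex.ofReal_pow, ← Complex.mul_conj', map_expect, expect_mul_expect, expect_comm,
      expect_comm (f := fun u x => ψ (Δ_[u] f x))]
    refine expect_congr rfl fun x _ => ?_
    refine (Fintype.expect_equiv (Equiv.addLeft x) _ _ fun u => ?_).symm
    simp [fwdDiff, ← AddChar.map_neg_eq_conj, ← AddChar.map_add_eq_mul, sub_eq_add_neg]
  calc ‖𝔼 x, ψ (f x)‖ ^ 2 = ‖𝔼 u, 𝔼 x, ψ (Δ_[u] f x)‖ := by
        rw [← hsq, Complex.norm_real, Real.norm_of_nonneg (by positivity)]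
    _ ≤ 𝔼 u, ‖𝔼 x, ψ (Δ_[u] f x)‖ := RCLike.norm_expect_le (K := ℝ)

lemma norm_expect_pow_le_expect_norm_expect_iterFwdDiff (m : ℕ) (f : V → G) :
    ‖𝔼 x, ψ (f x)‖ ^ 2 ^ m ≤ 𝔼 h : Fin m → V, ‖𝔼 x, ψ (iterFwdDiff h f x)‖ := by
  induction m with
  | zero => simp [iterFwdDiff]
  | succ m ih => calc
    ‖𝔼 x, ψ (f x)‖ ^ 2 ^ (m + 1) = (‖𝔼 x, ψ (f x)‖ ^ 2 ^ m) ^ 2 := by rw [pow_succ, pow_mul]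
    _ ≤ (𝔼 h : Fin m → V, ‖𝔼 x, ψ (iterFwdDiff h f x)‖) ^ 2 := by gcongr
    _ ≤ 𝔼 h : Fin m → V, ‖𝔼 x, ψ (iterFwdDiff h f x)‖ ^ 2 := by
      simpa using expect_mul_sq_le_sq_mul_sq univ (fun h : Fin m → V =>
        ‖𝔼 x, ψ (iterFwdDiff h f x)‖) 1
    _ ≤ 𝔼 h : Fin m → V, 𝔼 u, ‖𝔼 x, ψ (Δ_[u] (iterFwdDiff h f) x)‖ :=
      expect_le_expect fun h _ => norm_expect_sq_le_expect_norm_expect_fwdDiff ψ _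
    _ = 𝔼 h : Fin (m + 1) → V, ‖𝔼 x, ψ (iterFwdDiff h f x)‖ := by
      simp only [fwdDiff_iterFwdDiff, expect_pi_fin_succ, iterFwdDiff_cons]
      exact expect_comm _ _ _

lemma ofReal_norm_expect_eq_expect_fwdDiff {g : V → G} (hg : ∀ u v, Δ_[u] (Δ_[v] g) = 0) :
    ((‖𝔼 x, ψ (g x)‖ : ℝ) : ℂ) = 𝔼 x, ψ (Δ_[x] g 0) := by
  -- `g = g 0 + L` with `L` additive, so `ψ ∘ g` is a unimodular constant times the character
  -- `ψ ∘ L`, whose mean is `1` or `0`.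
  let L : V →+ G := AddMonoidHom.mk' (fun x => Δ_[x] g 0) fun x y => by
    have := congrFun (hg y x) 0
    simp only [fwdDiff, zero_add, Pi.zero_apply, add_comm y x] at this ⊢
    rw [← sub_eq_zero, ← this]
    abel
  have hgL : ∀ x, g x = g 0 + L x := fun x => by simp [L, fwdDiff]
  have hχ : 𝔼 x, ψ (g x) = ψ (g 0) * 𝔼 x, (ψ.compAddMonoidHom L) x := by
    simp only [mul_expect, AddChar.compAddMonoidHom_apply, ← AddChar.map_add_eq_mul, ← hgL]
  rw [hχ, norm_mul, AddChar.norm_apply, one_mul]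
  change _ = 𝔼 x, (ψ.compAddMonoidHom L) x
  rw [AddChar.expect_eq_ite]
  split_ifs <;> simp

lemma ofReal_expect_norm_expect_iterFwdDiff {m : ℕ} {f : V → G}
    (hf : ∀ h : Fin (m + 2) → V, iterFwdDiff h f = 0) :
    ((𝔼 h : Fin m → V, ‖𝔼 x, ψ (iterFwdDiff h f x)‖ : ℝ) : ℂ)
      = 𝔼 h : Fin (m + 1) → V, ψ (iterFwdDiff h f 0) := by
  rw [Complex.ofReal_expect, expect_pi_fin_succ, expect_comm]
  refine expect_congr rfl fun h _ => ?_
  simp only [iterFwdDiff_cons, ← fwdDiff_iterFwdDiff]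
  refine ofReal_norm_expect_eq_expect_fwdDiff ψ fun u v => ?_
  rw [fwdDiff_iterFwdDiff, fwdDiff_iterFwdDiff, ← iterFwdDiff_cons, ← iterFwdDiff_cons]
  exact hf _

theorem norm_expect_pow_le_norm_expect_iterFwdDiff {d : ℕ} {f : V → G}
    (hf : ∀ h : Fin (d + 1) → V, iterFwdDiff h f = 0) :
    ‖𝔼 x, ψ (f x)‖ ^ 2 ^ (d - 1) ≤ ‖𝔼 h : Fin d → V, ψ (iterFwdDiff h f 0)‖ := by
  cases d with
  | zero =>
    have : ‖𝔼 x, ψ (f x)‖ ≤ 1 :=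
      (RCLike.norm_expect_le (K := ℝ)).trans (by simp [AddChar.norm_apply])
    simpa [iterFwdDiff, AddChar.norm_apply] using this
  | succ m =>
    rw [← ofReal_expect_norm_expect_iterFwdDiff ψ hf, Complex.norm_real,
      Real.norm_of_nonneg (by positivity)]
    exact norm_expect_pow_le_expect_norm_expect_iterFwdDiff ψ m f

end Character

lemma e_eq_stdAddChar (p : ℕ) [NeZero p] : e p = ⇑(ZMod.stdAddChar (N := p)) := by
  ext t
  rw [ZMod.stdAddChar_apply, ZMod.toCircle_apply, e]

lemma Real.le_rpow_neg_div_of_pow_le {a b r : ℝ} {N : ℕ} (ha : 0 ≤ a) (hb : 0 ≤ b) (hN : N ≠ 0)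
    (h : a ^ N ≤ b ^ (-r)) : a ≤ b ^ (-(r / N)) := by
  rw [← neg_div, div_eq_mul_inv, Real.rpow_mul hb,
    Real.le_rpow_inv_iff_of_pos ha (by positivity) (by positivity), Real.rpow_natCast]
  exact h

/-- for a polynomial `π` of degree at most `d` on `𝔽_p^n`, with
associated symmetric `d`-linear form `κ(h) = Σ_{ε∈{0,1}^d}(-1)^{d-|ε|}π(ε·h)`,
and analytic rank `r` defined by `p^{-r} = 𝔼_h ω^{κ(h)}`, one has
`|𝔼_x ω^{π(x)}| ≤ p^{-r/2^{d-1}}`. -/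
theorem stmt4 (p n d : ℕ) [Fact p.Prime]
    (P : MvPolynomial (Fin n) (ZMod p)) (hdeg : P.totalDegree ≤ d)
    (κ : (Fin d → (Fin n → ZMod p)) → ZMod p)
    (hκ : ∀ h, κ h = ∑ S : Finset (Fin d),
      (-1 : ZMod p) ^ (d - S.card) * MvPolynomial.eval (∑ i ∈ S, h i) P)
    (r : ℝ)
    (hrank : (∑ h : Fin d → (Fin n → ZMod p), e p (κ h))
        / (Fintype.card (Fin d → (Fin n → ZMod p)) : ℂ)
      = (((p : ℝ) ^ (-r) : ℝ) : ℂ)) :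
    ‖(∑ x : Fin n → ZMod p, e p (MvPolynomial.eval x P))
        / (Fintype.card (Fin n → ZMod p) : ℂ)‖
      ≤ (p : ℝ) ^ (-(r / 2 ^ (d - 1))) := by
  have : NeZero p := ⟨(Fact.out : p.Prime).ne_zero⟩
  have hκ' : ∀ h, κ h = iterFwdDiff h (fun x => MvPolynomial.eval x P) 0 := fun h => by
    simp [hκ, iterFwdDiff_eq_sum, zsmul_eq_mul]
  have key := norm_expect_pow_le_norm_expect_iterFwdDiff ZMod.stdAddChar
    (MvPolynomial.iterFwdDiff_eval_eq_zero P (Nat.lt_succ_of_le hdeg))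
  rw [← e_eq_stdAddChar, Fintype.expect_eq_sum_div_card, Fintype.expect_eq_sum_div_card] at key
  simp only [← hκ', hrank, Complex.norm_real] at key
  rw [Real.norm_of_nonneg (by positivity)] at key
  simpa using Real.le_rpow_neg_div_of_pow_le (norm_nonneg _) p.cast_nonneg
    (pow_ne_zero _ two_ne_zero) key
end

section
/- Let p > s be primes/integers with p prime, and let L₁,…,L_m be linear forms in d variables with coefficients in 𝔽_p, regarded as functions 𝔽_p^d → 𝔽_p. Then the functions L₁^s,…,L_m^s are linearly independent over 𝔽_p if and only if the s-linear forms (x₁,…,x_s) ↦ Lᵢ(x₁)⋯Lᵢ(x_s) (for i = 1,…,m), as functions (𝔽_p^d)^s → 𝔽_p, are linearly independent over 𝔽_p. -/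
/-!
Restricting a function on `Vˢ` to the diagonal is linear and sends `∏ⱼ L(xⱼ)` to `L^s`.
Conversely, the polarization identity
`∑_{t ⊆ {1,…,s}} (-1)^(s-|t|) (∑_{j ∈ t} aⱼ)^s = s! a₁⋯aₛ`
yields a linear map sending `L^s` to `s! ∏ⱼ L(xⱼ)`. When `s!` is invertible (`p > s`), each
family is therefore the image of the other under a linear map, and linear independence pulls
back along linear maps.
-/

open Finset Nat

theorem sum_superset_neg_one_pow {R ι : Type*} [CommRing R] [Fintype ι] [DecidableEq ι]
    (S : Finset ι) :
    ∑ t : Finset ι, (if S ⊆ t then (-1 : R) ^ (Fintype.card ι - #t) else 0) =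
      if S = univ then 1 else 0 := by
  -- Expand `∏ᵢ (1 - [i ∉ S]) = [S = univ]` over the subsets of `ι`.
  have h := prod_add (fun _ => (1 : R)) (fun i => if i ∉ S then -1 else 0) univ
  have hl (i : ι) : (1 : R) + (if i ∉ S then -1 else 0) = if i ∈ S then 1 else 0 := by
    split_ifs <;> simp_all
  have hr (t : Finset ι) : ∏ i ∈ univ \ t, (if i ∉ S then (-1 : R) else 0) =
      if S ⊆ t then (-1 : R) ^ (Fintype.card ι - #t) else 0 := by
    rw [prod_ite_zero, prod_const, card_univ_sdiff]
    congr 1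
    simp [subset_iff, not_imp_comm]
  simp only [hl, hr, prod_boole, prod_const_one, one_mul, powerset_univ] at h
  rw [← h]
  simp [eq_univ_iff_forall]

theorem sum_bijective_prod_comp {R : Type*} [CommSemiring R] (n : ℕ) (a : Fin n → R) :
    ∑ g : Fin n → Fin n, (if g.Bijective then ∏ k, a (g k) else 0) = n ! * ∏ j, a j := by
  classical
  rw [← sum_filter, sum_subtype _ (fun _ => mem_filter_univ _),
    ← Equiv.sum_comp (Equiv.bijectiveEquiv (α := Fin n) (β := Fin n)).symm]
  simp only [Equiv.bijectiveEquiv_symm_apply_coe, Equiv.prod_comp]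
  rw [sum_const, Finset.card_univ, Fintype.card_perm, Fintype.card_fin, nsmul_eq_mul]

theorem polarization_identity {R : Type*} [CommRing R] (n : ℕ) (a : Fin n → R) :
    ∑ t : Finset (Fin n), (-1 : R) ^ (n - #t) * (∑ j ∈ t, a j) ^ n = n ! * ∏ j, a j := by
  classical
  have expand (t : Finset (Fin n)) : (∑ j ∈ t, a j) ^ n =
      ∑ g : Fin n → Fin n, if univ.image g ⊆ t then ∏ k, a (g k) else 0 := by
    rw [sum_pow', ← sum_filter]
    congr 1
    ext g
    simp [Fintype.mem_piFinset, image_subset_iff]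
  calc ∑ t : Finset (Fin n), (-1 : R) ^ (n - #t) * (∑ j ∈ t, a j) ^ n
      = ∑ g : Fin n → Fin n, (∑ t : Finset (Fin n),
          if univ.image g ⊆ t then (-1 : R) ^ (Fintype.card (Fin n) - #t) else 0) *
            ∏ k, a (g k) := by
        simp only [expand, mul_sum, sum_mul, Fintype.card_fin, mul_ite, ite_mul, mul_zero,
          zero_mul]
        exact sum_comm
    _ = ∑ g : Fin n → Fin n, (if g.Bijective then ∏ k, a (g k) else 0) := by
        refine sum_congr rfl fun g _ => ?_
        rw [sum_superset_neg_one_pow, ite_mul, one_mul, zero_mul]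
        refine if_congr ?_ rfl rfl
        rw [← Finite.surjective_iff_bijective]
        simp [eq_univ_iff_forall, Function.Surjective]
    _ = n ! * ∏ j, a j := sum_bijective_prod_comp n a

section LinearForms

variable {R V ι : Type*} [CommRing R] [AddCommGroup V] [Module R V]

variable (R V) in
noncomputable def polarizationMap (s : ℕ) : (V → R) →ₗ[R] (Fin s → V) → R :=
  ∑ t : Finset (Fin s),
    (-1 : R) ^ (s - #t) • LinearMap.funLeft R R fun x : Fin s → V => ∑ j ∈ t, x j

theorem polarizationMap_pow (s : ℕ) (L : Module.Dual R V) :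
    polarizationMap R V s (fun v => L v ^ s) = fun x => (s ! : R) * ∏ j, L (x j) := by
  ext x
  rw [← polarization_identity]
  simp [polarizationMap, LinearMap.funLeft_apply, map_sum]

theorem linearIndependent_prod_of_linearIndependent_pow (s : ℕ) (L : ι → Module.Dual R V)
    (h : LinearIndependent R fun i (v : V) => L i v ^ s) :
    LinearIndependent R fun i (x : Fin s → V) => ∏ j, L i (x j) := by
  refine .of_comp (LinearMap.funLeft R R fun (v : V) (_ : Fin s) => v) ?_
  convert h using 1
  ext i v
  simp [LinearMap.funLeft_apply]

theorem linearIndependent_pow_of_linearIndependent_prod {s : ℕ} (hs : IsUnit (s ! : R))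
    (L : ι → Module.Dual R V)
    (h : LinearIndependent R fun i (x : Fin s → V) => ∏ j, L i (x j)) :
    LinearIndependent R fun i (v : V) => L i v ^ s := by
  refine .of_comp (polarizationMap R V s) ?_
  convert h.units_smul fun _ => hs.unit using 1
  ext i x
  simp [polarizationMap_pow]

theorem linearIndependent_pow_iff_linearIndependent_prod {s : ℕ} (hs : IsUnit (s ! : R))
    (L : ι → Module.Dual R V) :
    (LinearIndependent R fun i (v : V) => L i v ^ s) ↔
      LinearIndependent R fun i (x : Fin s → V) => ∏ j, L i (x j) :=
  ⟨linearIndependent_prod_of_linearIndependent_pow s L,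
    linearIndependent_pow_of_linearIndependent_prod hs L⟩

end LinearForms

/-- let `p > s` with `p` prime, and let `L₁,…,L_m` be linear forms in
`d` variables over `𝔽_p` (given by coefficient vectors `c i`). Then the functions
`L₁^s,…,L_m^s : 𝔽_p^d → 𝔽_p` are linearly independent iff the `s`-linear forms
`(x₁,…,x_s) ↦ Lᵢ(x₁)⋯Lᵢ(x_s) : (𝔽_p^d)^s → 𝔽_p` are linearly independent. -/
theorem stmt6 (p s d m : ℕ) [Fact p.Prime] (hps : s < p)
    (c : Fin m → Fin d → ZMod p) :
    LinearIndependent (ZMod p)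
      (fun i : Fin m => (fun x : Fin d → ZMod p => (∑ u, c i u * x u) ^ s)) ↔
    LinearIndependent (ZMod p)
      (fun i : Fin m => (fun x : Fin s → (Fin d → ZMod p) =>
        ∏ j, ∑ u, c i u * x j u)) := by
  have hs : IsUnit (s ! : ZMod p) := by
    refine Ne.isUnit fun h => ?_
    rw [ZMod.natCast_eq_zero_iff, (Fact.out : p.Prime).dvd_factorial] at h
    omega
  exact linearIndependent_pow_iff_linearIndependent_prod hs
    fun i => dotProductBilin (ZMod p) (ZMod p) (c i)
end

section
/- Let s be a positive integer and let L₁,…,L_m be linear forms in d variables over 𝔽_p such that the functions L₁^s,…,L_m^s : 𝔽_p^d → 𝔽_p are linearly independent. Then for every integer t with s ≤ t < p, the functions L₁^t,…,L_m^t are also linearly independent. -/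
/-!
Suppose `∑ gᵢ Lᵢ^t = 0`. Evaluating at `y + λx` and expanding, `λ ↦ ∑ gᵢ (Lᵢ y + λ Lᵢ x)^t`
is a polynomial of degree `≤ t < p` vanishing on all of `𝔽_p`, so each of its coefficients
vanishes; the coefficient of `λ^s` is `C(t,s) ∑ gᵢ Lᵢ(y)^(t-s) Lᵢ(x)^s`, and `p ∤ C(t,s)`.
Degree-`s` independence then forces `gᵢ Lᵢ(y)^(t-s) = 0` for every `y`, and choosing `y`
with `Lᵢ y ≠ 0` (possible as `Lᵢ^s ≠ 0`) gives `gᵢ = 0`.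
-/

open Finset Polynomial Cardinal

lemma linearIndependent_fun_iff {K X ι : Type*} [CommRing K] [Fintype ι]
    (f : ι → X → K) :
    LinearIndependent K f ↔ ∀ g : ι → K, (∀ x, ∑ i, g i * f i x = 0) → ∀ i, g i = 0 := by
  rw [Fintype.linearIndependent_iff]
  simp only [funext_iff, Finset.sum_apply, Pi.smul_apply, smul_eq_mul, Pi.zero_apply]

lemma sum_mul_add_mul_pow {K ι : Type*} [CommSemiring K] (s : Finset ι) (g a b : ι → K)
    (t : ℕ) (x : K) :
    ∑ i ∈ s, g i * (a i + x * b i) ^ t =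
      ∑ k ∈ range (t + 1), (t.choose k * ∑ i ∈ s, g i * b i ^ k * a i ^ (t - k)) * x ^ k := by
  simp_rw [add_comm (a _), add_pow, mul_sum, sum_mul]
  rw [sum_comm]
  refine sum_congr rfl fun k _ => sum_congr rfl fun i _ => ?_
  ring

section Domain

variable {K : Type*} [CommRing K] [IsDomain K]

lemma coeff_eq_zero_of_forall_sum_mul_pow_eq_zero {t : ℕ} (ht : (t : Cardinal) < #K)
    (c : ℕ → K) (h : ∀ x : K, ∑ k ∈ range (t + 1), c k * x ^ k = 0) {k : ℕ} (hk : k ≤ t) :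
    c k = 0 := by
  set P : K[X] := ∑ k ∈ range (t + 1), monomial k (c k)
  have hdeg : P.natDegree ≤ t :=
    natDegree_sum_le_of_forall_le _ _ fun j hj =>
      (natDegree_monomial_le _).trans (Nat.lt_succ_iff.mp (mem_range.mp hj))
  have hP : P = 0 := by
    refine eq_zero_of_forall_eval_zero_of_natDegree_lt_card P (fun x => ?_) ?_
    · simpa [P, eval_finsetSum] using h x
    · exact lt_of_le_of_lt (by exact_mod_cast hdeg) ht
  have := congrArg (coeff · k) hP
  simpa [P, finsetSum_coeff, coeff_monomial, Nat.lt_succ_iff.mpr hk] using this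

variable {V ι : Type*} [AddCommGroup V] [Module K V] [Fintype ι]

theorem LinearIndependent.pow_of_le {L : ι → V →ₗ[K] K} {s t : ℕ} (hs : s ≠ 0) (hst : s ≤ t)
    (ht : (t : Cardinal) < #K) (hchoose : (t.choose s : K) ≠ 0)
    (h : LinearIndependent K fun i x => L i x ^ s) :
    LinearIndependent K fun i x => L i x ^ t := by
  have hne := h.ne_zero
  rw [linearIndependent_fun_iff] at h ⊢
  intro g hg
  have hpolar : ∀ x y, ∑ i, g i * L i x ^ s * L i y ^ (t - s) = 0 := fun x y => by
    refine (mul_eq_zero.mp ?_).resolve_left hchoose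
    refine coeff_eq_zero_of_forall_sum_mul_pow_eq_zero ht
      (fun k => t.choose k * ∑ i, g i * L i x ^ k * L i y ^ (t - k)) (fun μ => ?_) hst
    rw [← sum_mul_add_mul_pow, ← hg (y + μ • x)]
    simp
  have hvanish : ∀ y i, g i * L i y ^ (t - s) = 0 := fun y =>
    h _ fun x => by simpa only [mul_right_comm] using hpolar x y
  intro i
  obtain ⟨y, hy⟩ : ∃ y, L i y ≠ 0 := by
    by_contra! hL
    exact hne i (funext fun x => by simp [hL x, zero_pow hs])
  exact (mul_eq_zero.mp (hvanish y i)).resolve_right (pow_ne_zero _ hy)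

end Domain

lemma ZMod.natCast_choose_ne_zero {p s t : ℕ} [Fact p.Prime] (hst : s ≤ t) (htp : t < p) :
    (t.choose s : ZMod p) ≠ 0 := by
  rw [Ne, ZMod.natCast_eq_zero_iff]
  exact (Nat.Prime.coprime_iff_not_dvd Fact.out).mp
    (Nat.Prime.coprime_choose_of_lt Fact.out htp hst)

/-- if the linear forms `L₁,…,L_m` in `d` variables over `𝔽_p` are
degree-`s` independent (i.e. `L₁^s,…,L_m^s : 𝔽_p^d → 𝔽_p` are linearly
independent), then for every integer `t` with `s ≤ t < p` they are degree-`t`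
independent. -/
theorem stmt7 (p s t d m : ℕ) [Fact p.Prime] (hs : 0 < s) (hst : s ≤ t) (htp : t < p)
    (c : Fin m → Fin d → ZMod p)
    (h : LinearIndependent (ZMod p)
      (fun i : Fin m => (fun x : Fin d → ZMod p => (∑ u, c i u * x u) ^ s))) :
    LinearIndependent (ZMod p)
      (fun i : Fin m => (fun x : Fin d → ZMod p => (∑ u, c i u * x u) ^ t)) := by
  have hcard : (t : Cardinal) < #(ZMod p) := by
    simpa [mk_fintype, ZMod.card] using htp
  exact LinearIndependent.pow_of_le (L := fun i => dotProductBilin (ZMod p) (ZMod p) (c i))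
    hs.ne' hst hcard (ZMod.natCast_choose_ne_zero hst htp) h
end

section
/- Let μ and ν be d-linear forms on 𝔽_p^n with analytic ranks r(μ) and r(ν). Then the analytic rank of μ+ν satisfies r(μ+ν) ≤ 2^d (r(μ) + r(ν)). Equivalently, writing α(κ) = 𝔼_{x∈(𝔽_p^n)^d} ω^{κ(x)}, one has α(μ+ν) ≥ (α(μ)α(ν))^{2^d}. -/
open Finset

open scoped BigOperators ComplexConjugate

/-!
By a change of variables, `α(μ) α(ν) = 𝔼_z 𝔼_x ω^{μ(x) + ν(x + z)}`. For every `z`, the `d`-fold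
box difference of the phase `x ↦ μ(x) + ν(x + z)` is `(μ + ν)(x - y)`: multilinearity kills every
term of the expansion of `ν(x + z)` that does not involve all `d` coordinates of `x`. Hence the
Gowers–Cauchy–Schwarz inequality `|𝔼 f|^{2^d} ≤ ‖f‖_□^{2^d}` bounds the `2^d`-th power of each inner
average by `α(μ + ν)`, and averaging over `z` (power-mean inequality) gives
`(α(μ) α(ν))^{2^d} ≤ α(μ + ν)`.
-/

section Character
variable {p : ℕ} [NeZero p]

lemma e_eq_toCircle (t : ZMod p) : e p t = ZMod.toCircle t := by
  rw [ZMod.toCircle_apply]; rfl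

lemma e_add (s t : ZMod p) : e p (s + t) = e p s * e p t := by
  simp only [e_eq_toCircle, AddChar.map_add_eq_mul, Circle.coe_mul]

lemma e_sub (s t : ZMod p) : e p (s - t) = e p s * conj (e p t) := by
  simp only [e_eq_toCircle, AddChar.map_sub_eq_div, div_eq_mul_inv, Circle.coe_mul,
    Circle.coe_inv_eq_conj]

end Character

section Expect
variable {ι : Type*} [Fintype ι]

lemma conj_expect (f : ι → ℂ) : conj (𝔼 i, f i) = 𝔼 i, conj (f i) := by
  simp only [Fintype.expect_eq_sum_div_card, map_div₀, map_sum, map_natCast]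

lemma expect_pow_two_pow_le [Nonempty ι] (f : ι → ℝ) (k : ℕ) :
    (𝔼 i, f i) ^ 2 ^ k ≤ 𝔼 i, f i ^ 2 ^ k := by
  induction k generalizing f with
  | zero => simp
  | succ k ih =>
    have hsq : (𝔼 i, f i) ^ 2 ≤ 𝔼 i, f i ^ 2 := by
      simpa using expect_mul_sq_le_sq_mul_sq univ f 1
    calc (𝔼 i, f i) ^ 2 ^ (k + 1) = ((𝔼 i, f i) ^ 2) ^ 2 ^ k := by rw [pow_succ', pow_mul]
      _ ≤ (𝔼 i, f i ^ 2) ^ 2 ^ k := by gcongr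
      _ ≤ 𝔼 i, (f i ^ 2) ^ 2 ^ k := ih _
      _ = 𝔼 i, f i ^ 2 ^ (k + 1) := by simp only [← pow_mul, ← pow_succ']

lemma expect_fin_cons {V M : Type*} [Fintype V] [AddCommMonoid M] [Module ℚ≥0 M] {d : ℕ}
    (f : (Fin (d + 1) → V) → M) : 𝔼 x, f x = 𝔼 a, 𝔼 w, f (Fin.cons a w) := by
  rw [← Fintype.expect_equiv (Fin.consEquiv fun _ => V) (fun q => f (Fin.cons q.1 q.2)) f
    (fun _ => rfl), ← univ_product_univ, expect_product]

lemma norm_expect_e_sq {p : ℕ} [NeZero p] (f : ι → ZMod p) :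
    ‖𝔼 a, e p (f a)‖ ^ 2 = (𝔼 a, 𝔼 b, e p (f a - f b)).re := by
  simp only [e_sub, ← Fintype.expect_mul_expect, ← conj_expect, Complex.mul_conj,
    Complex.normSq_eq_norm_sq, Complex.ofReal_re]

end Expect

section BoxDiff
variable {V G : Type*} [AddCommGroup G]

/-- `boxDiff d F x y = ∑_{S ⊆ Fin d} (-1)^|S| F(x with its coordinates in S replaced by y's)`,
the phase appearing in the `2^d`-th power of the Gowers box norm of `ω^F`. -/
def boxDiff : (d : ℕ) → ((Fin d → V) → G) → (Fin d → V) → (Fin d → V) → G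
  | 0, F, _, _ => F Fin.elim0
  | d + 1, F, x, y =>
      boxDiff d (fun w => F (Fin.cons (x 0) w) - F (Fin.cons (y 0) w)) (Fin.tail x) (Fin.tail y)

lemma boxDiff_sum {ι : Type*} (s : Finset ι) :
    ∀ (d : ℕ) (F : ι → (Fin d → V) → G) (x y : Fin d → V),
      boxDiff d (fun t => ∑ i ∈ s, F i t) x y = ∑ i ∈ s, boxDiff d (F i) x y
  | 0, _, _, _ => rfl
  | d + 1, F, x, y => by
    simp only [boxDiff, ← sum_sub_distrib]
    exact boxDiff_sum s d _ _ _

lemma boxDiff_const_zero (d : ℕ) (x y : Fin d → V) : boxDiff d (fun _ => (0 : G)) x y = 0 := by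
  simpa using boxDiff_sum (∅ : Finset Unit) d (fun _ _ => 0) x y

lemma boxDiff_add (d : ℕ) (F₁ F₂ : (Fin d → V) → G) (x y : Fin d → V) :
    boxDiff d (fun t => F₁ t + F₂ t) x y = boxDiff d F₁ x y + boxDiff d F₂ x y := by
  simpa using boxDiff_sum univ d ![F₁, F₂] x y

lemma boxDiff_eq_zero_of_forall_eq {d : ℕ} (j : Fin d) :
    ∀ (F : (Fin d → V) → G), (∀ x x', (∀ i ≠ j, x i = x' i) → F x = F x') →
      ∀ x y, boxDiff d F x y = 0 := by
  induction d with
  | zero => exact j.elim0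
  | succ d ih =>
    intro F hF x y
    induction j using Fin.cases with
    | zero =>
      have : ∀ w, F (Fin.cons (x 0) w) - F (Fin.cons (y 0) w) = 0 := fun w =>
        sub_eq_zero.2 (hF _ _ fun i hi => by cases i using Fin.cases <;> simp_all)
      simp only [boxDiff, this, boxDiff_const_zero]
    | succ k =>
      refine ih k _ (fun w w' hw => ?_) _ _
      have h (a : V) : F (Fin.cons a w) = F (Fin.cons a w') :=
        hF _ _ fun i hi => by
          cases i using Fin.cases with
          | zero => rfl
          | succ m => exact hw m fun hm => hi (hm ▸ rfl)
      rw [h, h]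

end BoxDiff

section Multilinear
variable {R V G : Type*} [CommRing R] [AddCommGroup V] [Module R V] [AddCommGroup G] [Module R G]

lemma boxDiff_multilinearMap :
    ∀ (d : ℕ) (κ : MultilinearMap R (fun _ : Fin d => V) G) (x y : Fin d → V),
      boxDiff d κ x y = κ (x - y)
  | 0, κ, x, y => congrArg κ (Subsingleton.elim _ _)
  | d + 1, κ, x, y => by
    have h : (fun w => κ (Fin.cons (x 0) w) - κ (Fin.cons (y 0) w)) = κ.curryLeft (x 0 - y 0) := by
      ext w; simp [map_sub]
    rw [boxDiff, h, boxDiff_multilinearMap d, MultilinearMap.curryLeft_apply]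
    congr 1
    ext i
    cases i using Fin.cases <;> simp [Fin.tail]

lemma boxDiff_multilinearMap_comp_add_right (d : ℕ) (κ : MultilinearMap R (fun _ : Fin d => V) G)
    (z x y : Fin d → V) : boxDiff d (fun t => κ (t + z)) x y = κ (x - y) := by
  simp only [κ.map_add_univ, boxDiff_sum]
  rw [sum_eq_single univ]
  · simpa using boxDiff_multilinearMap d κ x y
  · intro s _ hs
    obtain ⟨j, hj⟩ : ∃ j, j ∉ s := by simpa [eq_univ_iff_forall] using hs
    refine boxDiff_eq_zero_of_forall_eq j _ (fun t t' ht => congrArg κ ?_) x y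
    ext i
    by_cases hi : i ∈ s
    · simp only [piecewise_eq_of_mem _ _ _ hi, ht i fun h => hj (h ▸ hi)]
    · simp only [piecewise_eq_of_notMem _ _ _ hi]
  · simp

end Multilinear

section BoxExpect
variable {p : ℕ} {V : Type*} [Fintype V]

noncomputable def boxExpect (d : ℕ) (F : (Fin d → V) → ZMod p) : ℂ :=
  𝔼 x, 𝔼 y, e p (boxDiff d F x y)

lemma boxExpect_zero (F : (Fin 0 → V) → ZMod p) : boxExpect 0 F = 𝔼 w, e p (F w) := by
  have h (w : Fin 0 → V) : F w = F Fin.elim0 := congrArg F (Subsingleton.elim _ _)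
  simp only [boxExpect, boxDiff, h, Fintype.expect_const]

lemma boxExpect_succ (d : ℕ) (F : (Fin (d + 1) → V) → ZMod p) :
    boxExpect (d + 1) F =
      𝔼 ab : V × V, boxExpect d (fun w => F (Fin.cons ab.1 w) - F (Fin.cons ab.2 w)) := by
  simp only [boxExpect, expect_fin_cons (fun x => 𝔼 y, _), expect_fin_cons (fun y => _),
    boxDiff, Fin.cons_zero, Fin.tail_cons, ← univ_product_univ, expect_product]
  exact expect_congr rfl fun a _ => expect_comm ..

variable [NeZero p]

lemma norm_expect_e_sq_le [Nonempty V] (d : ℕ) (F : (Fin (d + 1) → V) → ZMod p) :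
    ‖𝔼 x, e p (F x)‖ ^ 2 ≤
      (𝔼 ab : V × V, 𝔼 w, e p (F (Fin.cons ab.1 w) - F (Fin.cons ab.2 w))).re := by
  set g : (Fin d → V) → ℂ := fun w => 𝔼 a, e p (F (Fin.cons a w))
  calc ‖𝔼 x, e p (F x)‖ ^ 2 = ‖𝔼 w, g w‖ ^ 2 := by rw [expect_fin_cons, expect_comm]
    _ ≤ (𝔼 w, ‖g w‖) ^ 2 := by gcongr; exact RCLike.norm_expect_le (K := ℂ)
    _ ≤ 𝔼 w, ‖g w‖ ^ 2 := by simpa using expect_pow_two_pow_le (fun w => ‖g w‖) 1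
    _ = _ := by
      simp only [g, norm_expect_e_sq, ← Complex.re_expect, ← univ_product_univ, expect_product]
      rw [expect_comm]
      exact congrArg _ (expect_congr rfl fun a _ => expect_comm ..)

lemma norm_expect_e_pow_le_re_boxExpect [Nonempty V] (d : ℕ) (F : (Fin (d + 1) → V) → ZMod p) :
    ‖𝔼 x, e p (F x)‖ ^ 2 ^ (d + 1) ≤ (boxExpect (d + 1) F).re := by
  induction d with
  | zero => simpa [boxExpect_succ, boxExpect_zero] using norm_expect_e_sq_le 0 F
  | succ d ih =>
    set T : V × V → ℂ := fun ab => 𝔼 w, e p (F (Fin.cons ab.1 w) - F (Fin.cons ab.2 w))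
    have hsq : ‖𝔼 x, e p (F x)‖ ^ 2 ≤ (𝔼 ab, T ab).re := norm_expect_e_sq_le (d + 1) F
    calc ‖𝔼 x, e p (F x)‖ ^ 2 ^ (d + 2) = (‖𝔼 x, e p (F x)‖ ^ 2) ^ 2 ^ (d + 1) := by
          rw [← pow_mul, ← pow_succ']
      _ ≤ (𝔼 ab, T ab).re ^ 2 ^ (d + 1) := by gcongr
      _ ≤ (𝔼 ab, ‖T ab‖) ^ 2 ^ (d + 1) := by
          have : 0 ≤ (𝔼 ab, T ab).re := (sq_nonneg _).trans hsq
          gcongr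
          rw [Complex.re_expect]
          exact expect_le_expect fun ab _ => Complex.re_le_norm _
      _ ≤ 𝔼 ab, ‖T ab‖ ^ 2 ^ (d + 1) := expect_pow_two_pow_le _ _
      _ ≤ 𝔼 ab, (boxExpect (d + 1) fun w => F (Fin.cons ab.1 w) - F (Fin.cons ab.2 w)).re :=
          expect_le_expect fun ab _ => ih fun w => F (Fin.cons ab.1 w) - F (Fin.cons ab.2 w)
      _ = (boxExpect (d + 2) F).re := by rw [boxExpect_succ, Complex.re_expect]

lemma norm_expect_e_pow_le_norm_boxExpect [Nonempty V] :
    ∀ (d : ℕ) (F : (Fin d → V) → ZMod p), ‖𝔼 x, e p (F x)‖ ^ 2 ^ d ≤ ‖boxExpect d F‖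
  | 0, F => by simp [boxExpect_zero]
  | d + 1, F => (norm_expect_e_pow_le_re_boxExpect d F).trans (Complex.re_le_norm _)

end BoxExpect

section Bias
variable {p : ℕ} {V : Type*} [AddCommGroup V] [Module (ZMod p) V] [Fintype V] {d : ℕ}

noncomputable def bias (κ : MultilinearMap (ZMod p) (fun _ : Fin d => V) (ZMod p)) : ℂ :=
  𝔼 x, e p (κ x)

variable (μ ν : MultilinearMap (ZMod p) (fun _ : Fin d => V) (ZMod p))

lemma boxExpect_shift_eq_bias (z : Fin d → V) :
    boxExpect d (fun x => μ x + ν (x + z)) = bias (μ + ν) := by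
  have h (x : Fin d → V) : 𝔼 y, e p ((μ + ν) (x - y)) = bias (μ + ν) :=
    Fintype.expect_equiv (Equiv.subLeft x) _ _ fun _ => rfl
  simp only [boxExpect, boxDiff_add, boxDiff_multilinearMap, boxDiff_multilinearMap_comp_add_right,
    ← add_apply, h, Fintype.expect_const]

variable [NeZero p]

lemma bias_mul_bias : bias μ * bias ν = 𝔼 z, 𝔼 x, e p (μ x + ν (x + z)) := by
  rw [bias, bias, Fintype.expect_mul_expect, expect_comm (f := fun z x => e p (μ x + ν (x + z)))]
  exact expect_congr rfl fun x _ =>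
    (Fintype.expect_equiv (Equiv.addLeft x) _ _ fun z => e_add _ _).symm

lemma norm_bias_mul_norm_bias_pow_le : (‖bias μ‖ * ‖bias ν‖) ^ 2 ^ d ≤ ‖bias (μ + ν)‖ := by
  set T : (Fin d → V) → ℂ := fun z => 𝔼 x, e p (μ x + ν (x + z))
  calc (‖bias μ‖ * ‖bias ν‖) ^ 2 ^ d = ‖𝔼 z, T z‖ ^ 2 ^ d := by rw [← norm_mul, bias_mul_bias]
    _ ≤ (𝔼 z, ‖T z‖) ^ 2 ^ d := by gcongr; exact RCLike.norm_expect_le (K := ℂ)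
    _ ≤ 𝔼 z, ‖T z‖ ^ 2 ^ d := expect_pow_two_pow_le _ _
    _ ≤ 𝔼 z : Fin d → V, ‖bias (μ + ν)‖ := expect_le_expect fun z _ =>
        (norm_expect_e_pow_le_norm_boxExpect d _).trans_eq
          (congrArg _ (boxExpect_shift_eq_bias μ ν z))
    _ = ‖bias (μ + ν)‖ := Fintype.expect_const _

end Bias

/-- let `μ, ν` be `d`-linear forms on `𝔽_p^n` with analytic ranks
`r(μ), r(ν)` (defined by `α(κ) = 𝔼_x ω^{κ(x)} = p^{-r(κ)}`). Then
`r(μ+ν) ≤ 2^d (r(μ) + r(ν))` — equivalently, `α(μ+ν) ≥ (α(μ)α(ν))^{2^d}`. -/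
theorem stmt13 (p n d : ℕ) [Fact p.Prime]
    (μ ν : MultilinearMap (ZMod p) (fun _ : Fin d => (Fin n → ZMod p)) (ZMod p))
    (rμ rν rs : ℝ)
    (hμ : (∑ x : Fin d → (Fin n → ZMod p), e p (μ x))
        / (Fintype.card (Fin d → (Fin n → ZMod p)) : ℂ) = (((p : ℝ) ^ (-rμ) : ℝ) : ℂ))
    (hν : (∑ x : Fin d → (Fin n → ZMod p), e p (ν x))
        / (Fintype.card (Fin d → (Fin n → ZMod p)) : ℂ) = (((p : ℝ) ^ (-rν) : ℝ) : ℂ))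
    (hs : (∑ x : Fin d → (Fin n → ZMod p), e p ((μ + ν) x))
        / (Fintype.card (Fin d → (Fin n → ZMod p)) : ℂ) = (((p : ℝ) ^ (-rs) : ℝ) : ℂ)) :
    rs ≤ 2 ^ d * (rμ + rν) := by
  have hp : (1 : ℝ) < p := by exact_mod_cast (Fact.out : p.Prime).one_lt
  have hnorm (κ : MultilinearMap (ZMod p) (fun _ : Fin d => (Fin n → ZMod p)) (ZMod p)) (r : ℝ)
      (h : (∑ x, e p (κ x)) / (Fintype.card (Fin d → (Fin n → ZMod p)) : ℂ) =
        ((p : ℝ) ^ (-r) : ℝ)) :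
      ‖bias κ‖ = (p : ℝ) ^ (-r) := by
    rw [bias, Fintype.expect_eq_sum_div_card, h, Complex.norm_real, Real.norm_eq_abs,
      abs_of_pos (by positivity)]
  have key := norm_bias_mul_norm_bias_pow_le μ ν
  rw [hnorm μ rμ hμ, hnorm ν rν hν, hnorm _ rs hs, ← Real.rpow_add (by positivity),
    ← Real.rpow_natCast, ← Real.rpow_mul (by positivity), Real.rpow_le_rpow_left_iff hp] at key
  push_cast at key
  linarith
end

section
/- Let A be an m×n matrix over a field 𝔽, and suppose that the i-th row of A cannot be expressed as a linear combination of the other rows. Then the column space of A contains the i-th standard basis vector eᵢ ∈ 𝔽^m (the vector with 1 in position i and 0 elsewhere). -/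
open Finset

/-!
A row `A i` outside the span of the other rows is separated from them by a linear functional
`f` with `f (A i) = 1` that vanishes on every other row. Writing `f` as the dot product with a
vector `z`, the entries of `A *ᵥ z` are the values `f (A j)`, so `A *ᵥ z = eᵢ`.
-/

namespace Matrix

variable {K m n : Type*} [Field K] [Fintype n]

theorem mulVec_dotProductEquiv_symm [DecidableEq n] (A : Matrix m n K)
    (f : Module.Dual K (n → K)) : A *ᵥ (dotProductEquiv K n).symm f = fun j ↦ f (A j) := by
  ext j
  rw [mulVec, dotProduct_comm]
  exact LinearMap.congr_fun ((dotProductEquiv K n).apply_symm_apply f) (A j)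

theorem single_mem_range_mulVecLin_of_row_notMem_span [DecidableEq m] (A : Matrix m n K)
    {i : m} (h : A i ∉ Submodule.span K {v | ∃ j, j ≠ i ∧ v = A j}) :
    Pi.single i 1 ∈ LinearMap.range A.mulVecLin := by
  classical
  obtain ⟨f, hf_span, hf_row⟩ := LinearMap.exists_extend_of_notMem 0 h (1 : K)
  refine ⟨(dotProductEquiv K n).symm f, ?_⟩
  rw [mulVecLin_apply, mulVec_dotProductEquiv_symm]
  ext j
  rcases eq_or_ne j i with rfl | hji
  · simpa using hf_row
  · have hj : A j ∈ Submodule.span K {v | ∃ j, j ≠ i ∧ v = A j} :=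
      Submodule.subset_span ⟨j, hji, rfl⟩
    simpa [hji] using congr($hf_span ⟨A j, hj⟩)

end Matrix

/-- let `A` be an `m×n` matrix over a field `F` whose `i`-th row is
not a linear combination of the other rows. Then the column space of `A`
contains the `i`-th standard basis vector of `F^m`. -/
theorem stmt16 {F : Type*} [Field F] (m n : ℕ)
    (A : Matrix (Fin m) (Fin n) F) (i : Fin m)
    (h : A i ∉ Submodule.span F {v : Fin n → F | ∃ j, j ≠ i ∧ v = A j}) :
    Pi.single i (1 : F) ∈ LinearMap.range A.mulVecLin :=
  A.single_mem_range_mulVecLin_of_row_notMem_span h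
end
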